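/- Suppose Assumption 2 holds and a single entity a, following a non-jumping sequence that targets nodes in decreasing order of their initial health starting at time 0, targets nodes i_1, …, i_f (with v_0^{i_1} ≥ … ≥ v_0^{i_f}) and permanently repairs all of them. Let k be a node with v_0^k > v_0^{i_1}. Then the non-jumping sequence in which entity a targets node k starting at time 0 and afterwards targets i_1, …, i_{f−1} in that order permanently repairs all f nodes k, i_1, …, i_{f−1}. -/

import Mathlib

open Classical ENNReal NNReal

noncomputable def listTargets {N M : ℕ} (hl : Fin N → ℝ) (L : Fin M → List (Fin N))
    (h : Fin M) : Option (Fin N) :=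
  (L h).find? fun j => decide (0 < hl j ∧ hl j < 1)


noncomputable def listHealth {N M : ℕ} (v0 : Fin N → ℝ) (Δinc : Fin N → Fin M → ℝ)
    (Δdec : Fin N → ℝ) (L : Fin M → List (Fin N)) : ℕ → Fin N → ℝ
  | 0 => v0
  | t + 1 => fun j =>
      let hl := listHealth v0 Δinc Δdec L t
      let v := hl j
      if v = 1 then 1
      else if v = 0 then 0
      else if hx : ∃ h, listTargets hl L h = some j then min 1 (v + Δinc j hx.choose)
      else max 0 (v - Δdec j)


def Assumption2 {N M : ℕ} (v0 : Fin N → ℝ) (Δinc : Fin N → Fin M → ℝ)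
    (Δdec : Fin N → ℝ) (c : Fin M → NNReal) : Prop :=
  ∃ (Δi : Fin M → ℝ) (Δd : ℝ) (c' : NNReal),
    (∀ j h, Δinc j h = Δi h) ∧ (∀ j, Δdec j = Δd) ∧ (∀ h, Δi h ≤ Δd) ∧
    (∀ h, c h = c') ∧ (∀ h, ∃ n : ℕ, 0 < n ∧ Δd = (n : ℝ) * Δi h) ∧
    (∀ j h, ∃ m : ℕ, 0 < m ∧ 1 - v0 j = (m : ℝ) * Δi h)



section
variable {N : ℕ} (v0 : Fin N → ℝ) (Δinc : Fin N → Fin 1 → ℝ) (Δdec : Fin N → ℝ)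
  (C : List (Fin N)) (δ : ℝ)

noncomputable def Hh : ℕ → Fin N → ℝ := listHealth v0 Δinc Δdec (fun _ : Fin 1 => C)

theorem Hh_zero : Hh v0 Δinc Δdec C 0 = v0 := rfl

theorem Hh_step_target (hδ : ∀ j h, Δinc j h = δ) (t : ℕ) (j : Fin N)
    (h1 : Hh v0 Δinc Δdec C t j ≠ 1) (h0 : Hh v0 Δinc Δdec C t j ≠ 0)
    (hfind : C.find? (fun i => decide (0 < Hh v0 Δinc Δdec C t i ∧ Hh v0 Δinc Δdec C t i < 1)) = some j) :
    Hh v0 Δinc Δdec C (t+1) j = min 1 (Hh v0 Δinc Δdec C t j + δ) := by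
  show listHealth v0 Δinc Δdec (fun _ : Fin 1 => C) (t+1) j = _
  rw [listHealth]
  simp only []
  rw [show listHealth v0 Δinc Δdec (fun _ : Fin 1 => C) = Hh v0 Δinc Δdec C from rfl]
  rw [if_neg h1, if_neg h0, dif_pos ⟨(0 : Fin 1), hfind⟩]
  rw [hδ]

theorem Hh_step_untarget (t : ℕ) (j : Fin N)
    (h1 : Hh v0 Δinc Δdec C t j ≠ 1) (h0 : Hh v0 Δinc Δdec C t j ≠ 0)
    (hfind : C.find? (fun i => decide (0 < Hh v0 Δinc Δdec C t i ∧ Hh v0 Δinc Δdec C t i < 1)) ≠ some j) :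
    Hh v0 Δinc Δdec C (t+1) j = max 0 (Hh v0 Δinc Δdec C t j - Δdec j) := by
  show listHealth v0 Δinc Δdec (fun _ : Fin 1 => C) (t+1) j = _
  rw [listHealth]
  simp only []
  rw [show listHealth v0 Δinc Δdec (fun _ : Fin 1 => C) = Hh v0 Δinc Δdec C from rfl]
  rw [if_neg h1, if_neg h0, dif_neg]
  rintro ⟨h, hh⟩
  exact hfind hh

theorem Hh_step_one (t : ℕ) (j : Fin N) (h1 : Hh v0 Δinc Δdec C t j = 1) :
    Hh v0 Δinc Δdec C (t+1) j = 1 := by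
  show listHealth v0 Δinc Δdec (fun _ : Fin 1 => C) (t+1) j = _
  rw [listHealth]
  simp only []
  rw [show listHealth v0 Δinc Δdec (fun _ : Fin 1 => C) = Hh v0 Δinc Δdec C from rfl]
  rw [if_pos h1]

theorem Hh_step_zero (t : ℕ) (j : Fin N) (h1 : Hh v0 Δinc Δdec C t j ≠ 1)
    (h0 : Hh v0 Δinc Δdec C t j = 0) :
    Hh v0 Δinc Δdec C (t+1) j = 0 := by
  show listHealth v0 Δinc Δdec (fun _ : Fin 1 => C) (t+1) j = _
  rw [listHealth]
  simp only []
  rw [show listHealth v0 Δinc Δdec (fun _ : Fin 1 => C) = Hh v0 Δinc Δdec C from rfl]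
  rw [if_neg h1, if_pos h0]

theorem Hh_one_absorb (t : ℕ) (j : Fin N) (h : Hh v0 Δinc Δdec C t j = 1) :
    ∀ s, Hh v0 Δinc Δdec C (t + s) j = 1 := by
  intro s
  induction s with
  | zero => exact h
  | succ s ih =>
    have e : t + (s + 1) = (t + s) + 1 := rfl
    rw [e, Hh_step_one _ _ _ _ _ _ ih]

theorem Hh_zero_absorb (t : ℕ) (j : Fin N) (h : Hh v0 Δinc Δdec C t j = 0) :
    ∀ s, Hh v0 Δinc Δdec C (t + s) j = 0 := by
  intro s
  induction s with
  | zero => exact h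
  | succ s ih =>
    have e : t + (s + 1) = (t + s) + 1 := rfl
    rw [e, Hh_step_zero _ _ _ _ _ _ (by rw [ih]; norm_num) ih]

theorem Hh_never_one (T : ℕ) (j : Fin N) (h : Hh v0 Δinc Δdec C T j = 0) :
    ¬ ∃ t, Hh v0 Δinc Δdec C t j = 1 := by
  rintro ⟨t, ht⟩
  rcases le_total t T with hle | hle
  · have := Hh_one_absorb v0 Δinc Δdec C t j ht (T - t)
    rw [Nat.add_sub_cancel' hle] at this
    rw [this] at h; norm_num at h
  · have := Hh_zero_absorb v0 Δinc Δdec C T j h (t - T)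
    rw [Nat.add_sub_cancel' hle] at this
    rw [this] at ht; norm_num at ht

end

def Surv (δ : ℝ) (n : ℕ) : List ℕ → Prop
  | [] => True
  | a :: A => (a : ℝ) * δ < 1 ∧ Surv δ n (A.map fun b => b + n * a)
termination_by A => A.length
decreasing_by simpa using Nat.lt_succ_self _

theorem surv_nil (δ : ℝ) (n : ℕ) : Surv δ n [] := by rw [Surv]; trivial

theorem surv_cons (δ : ℝ) (n : ℕ) (a : ℕ) (A : List ℕ) :
    Surv δ n (a :: A) ↔ (a : ℝ) * δ < 1 ∧ Surv δ n (A.map fun b => b + n * a) := by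
  rw [Surv]

theorem surv_mono (δ : ℝ) (hδ : 0 ≤ δ) (n : ℕ) :
    ∀ (A B : List ℕ), List.Forall₂ (· ≤ ·) A B → Surv δ n B → Surv δ n A
  | [], [], _, _ => surv_nil δ n
  | a :: A, b :: B, h, hB => by
    rcases h with _ | ⟨hab, hAB⟩
    rw [surv_cons] at hB ⊢
    refine ⟨lt_of_le_of_lt (mul_le_mul_of_nonneg_right (by exact_mod_cast hab) hδ) hB.1, ?_⟩
    refine surv_mono δ hδ n _ _ ?_ hB.2
    rw [List.forall₂_map_left_iff, List.forall₂_map_right_iff]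
    exact hAB.imp fun x y hxy => by have h2 : n * a ≤ n * b := Nat.mul_le_mul_left _ hab; omega
termination_by A B => A.length
decreasing_by simpa using Nat.lt_succ_self _

theorem surv_lt_one (δ : ℝ) (hδ : 0 ≤ δ) (n : ℕ) :
    ∀ (A : List ℕ), Surv δ n A → ∀ a ∈ A, (a : ℝ) * δ < 1
  | [], _, a, ha => by simp at ha
  | a :: A, hS, b, hb => by
    rw [surv_cons] at hS
    rcases List.mem_cons.mp hb with rfl | hb
    · exact hS.1
    · have := surv_lt_one δ hδ n _ hS.2 (b + n * a) (List.mem_map_of_mem (f := fun b => b + n * a) hb)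
      refine lt_of_le_of_lt ?_ this
      gcongr
      exact_mod_cast Nat.le_add_right _ _
termination_by A => A.length
decreasing_by simpa using Nat.lt_succ_self _

section
variable {N : ℕ} (v0 : Fin N → ℝ) (Δinc : Fin N → Fin 1 → ℝ) (Δdec : Fin N → ℝ)
  (C : List (Fin N)) (δ : ℝ)

theorem phase (hδ : ∀ j h, Δinc j h = δ) (hδ0 : 0 < δ) (hDnn : ∀ i, 0 ≤ Δdec i)
    (done rem' : List (Fin N)) (j : Fin N) (hC : C = done ++ j :: rem')
    (T a : ℕ) (ha : 1 ≤ a)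
    (hdone : ∀ i ∈ done, Hh v0 Δinc Δdec C T i = 1)
    (hj : Hh v0 Δinc Δdec C T j = 1 - (a : ℝ) * δ) (hpos : 0 < 1 - (a : ℝ) * δ) :
    ∀ s, s ≤ a →
      (Hh v0 Δinc Δdec C (T + s) j = 1 - ((a - s : ℕ) : ℝ) * δ) ∧
      (∀ j', j' ≠ j → 0 ≤ Hh v0 Δinc Δdec C T j' → Hh v0 Δinc Δdec C T j' < 1 →
        Hh v0 Δinc Δdec C (T + s) j' = max 0 (Hh v0 Δinc Δdec C T j' - (s : ℝ) * Δdec j')) := by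
  intro s
  induction s with
  | zero =>
    intro _
    refine ⟨by simpa using hj, fun j' _ h0 _ => by simpa using (max_eq_right h0).symm⟩
  | succ s ih =>
    intro hsa
    have hs : s ≤ a := by omega
    obtain ⟨ihj, ihr⟩ := ih hs
    have e : T + (s + 1) = (T + s) + 1 := rfl
    -- facts about a - s
    have has1 : 1 ≤ a - s := by omega
    have hcast : ((a - s : ℕ) : ℝ) = ((a - (s + 1) : ℕ) : ℝ) + 1 := by
      have : (a - s) = (a - (s + 1)) + 1 := by omega
      rw [this]; push_cast; ring
    have hcnn : (0 : ℝ) ≤ ((a - (s + 1) : ℕ) : ℝ) := Nat.cast_nonneg _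
    have hboundj : ((a - s : ℕ) : ℝ) * δ ≤ (a : ℝ) * δ := by
      gcongr; exact_mod_cast Nat.sub_le a s
    have hjpos : 0 < Hh v0 Δinc Δdec C (T + s) j := by
      rw [ihj]; linarith
    have hjlt : Hh v0 Δinc Δdec C (T + s) j < 1 := by
      rw [ihj]
      have : (1 : ℝ) ≤ ((a - s : ℕ) : ℝ) := by exact_mod_cast has1
      nlinarith
    -- find? returns j at time T + s
    have hfind : C.find? (fun i => decide (0 < Hh v0 Δinc Δdec C (T + s) i ∧
        Hh v0 Δinc Δdec C (T + s) i < 1)) = some j := by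
      have hnone : (List.find? (fun i => decide (0 < Hh v0 Δinc Δdec C (T + s) i ∧
          Hh v0 Δinc Δdec C (T + s) i < 1)) done) = none := by
        rw [List.find?_eq_none]
        intro x hx
        have h1 : Hh v0 Δinc Δdec C (T + s) x = 1 := Hh_one_absorb v0 Δinc Δdec C T x (hdone x hx) s
        simp [h1]
      have key : List.find? (fun i => decide (0 < Hh v0 Δinc Δdec C (T + s) i ∧
          Hh v0 Δinc Δdec C (T + s) i < 1)) (done ++ j :: rem') = some j := by
        have hpj : (fun i => decide (0 < Hh v0 Δinc Δdec C (T + s) i ∧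
            Hh v0 Δinc Δdec C (T + s) i < 1)) j = true := by
          rw [decide_eq_true_eq]; exact ⟨hjpos, hjlt⟩
        rw [List.find?_append, hnone, List.find?_cons_of_pos (p := fun i =>
          decide (0 < Hh v0 Δinc Δdec C (T + s) i ∧ Hh v0 Δinc Δdec C (T + s) i < 1)) hpj]
        rfl
      exact hC.symm ▸ key
    constructor
    · -- targeted node
      rw [e, Hh_step_target v0 Δinc Δdec C δ hδ (T + s) j (ne_of_lt hjlt) (ne_of_gt hjpos) hfind]
      rw [ihj, hcast]
      rw [min_eq_right (by nlinarith)]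
      ring
    · -- untargeted nodes
      intro j' hne h0 h1
      have ihr' := ihr j' hne h0 h1
      rcases le_or_gt (Hh v0 Δinc Δdec C T j' - (s : ℝ) * Δdec j') 0 with hc | hc
      · have hz : Hh v0 Δinc Δdec C (T + s) j' = 0 := by rw [ihr']; exact max_eq_left hc
        rw [e, Hh_step_zero v0 Δinc Δdec C (T + s) j' (by rw [hz]; norm_num) hz]
        rw [max_eq_left]
        have : (0:ℝ) ≤ Δdec j' := hDnn j'
        push_cast
        nlinarith
      · have hv : Hh v0 Δinc Δdec C (T + s) j' = Hh v0 Δinc Δdec C T j' - (s : ℝ) * Δdec j' := by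
          rw [ihr']; exact max_eq_right (le_of_lt hc)
        have hlt1 : Hh v0 Δinc Δdec C (T + s) j' < 1 := by
          rw [hv]
          have h2 : (0:ℝ) ≤ (s : ℝ) * Δdec j' := mul_nonneg (Nat.cast_nonneg _) (hDnn j')
          linarith
        rw [e, Hh_step_untarget v0 Δinc Δdec C (T + s) j' (ne_of_lt hlt1)
          (by rw [hv]; exact ne_of_gt hc)
          (by rw [hfind]; simp [Option.some.injEq]; exact fun h => hne h.symm)]
        rw [hv]
        congr 1
        push_cast
        ring
end

theorem forall₂_imp_mem {α β : Type*} {R S : α → β → Prop} :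
    ∀ {l : List α} {u : List β}, List.Forall₂ R l u →
      (∀ x y, x ∈ l → y ∈ u → R x y → S x y) → List.Forall₂ S l u := by
  intro l
  induction l with
  | nil => intro u h _; cases h; exact List.Forall₂.nil
  | cons x l ih =>
    intro u h hmem
    cases h with
    | cons h1 h2 =>
      exact List.Forall₂.cons (hmem _ _ (by simp) (by simp) h1)
        (ih h2 fun x y hx hy => hmem x y (by simp [hx]) (by simp [hy]))

theorem max_collapse (x c : ℝ) (hc : 0 ≤ c) : max 0 (max 0 x - c) = max 0 (x - c) := by
  rcases le_or_gt x 0 with h | h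
  · rw [max_eq_left h, max_eq_left (by linarith), max_eq_left (by linarith)]
  · rw [max_eq_right (le_of_lt h)]

section
variable {N : ℕ} (v0 : Fin N → ℝ) (Δinc : Fin N → Fin 1 → ℝ) (Δdec : Fin N → ℝ)
  (C : List (Fin N)) (δ : ℝ) (n : ℕ)

theorem run (hδ : ∀ j h, Δinc j h = δ) (hδ0 : 0 < δ) (hD : ∀ i, Δdec i = (n : ℝ) * δ) :
    ∀ (rem : List (Fin N)) (A : List ℕ) (T : ℕ) (done : List (Fin N)),
      C = done ++ rem → C.Nodup →
      (∀ i ∈ done, Hh v0 Δinc Δdec C T i = 1) →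
      List.Forall₂ (fun (j : Fin N) (a : ℕ) => Hh v0 Δinc Δdec C T j = max 0 (1 - (a : ℝ) * δ)) rem A →
      (∀ a ∈ A, 1 ≤ a) → Surv δ n A →
      ∀ j ∈ rem, ∃ t, Hh v0 Δinc Δdec C t j = 1 := by
  intro rem
  induction rem with
  | nil => intro A T done _ _ _ _ _ _ j hj; simp at hj
  | cons j rem' IH =>
    intro A T done hC hnd hdone hF hge hS j' hj'
    cases A with
    | nil => exact absurd hF (by simp)
    | cons a A' =>
    rcases hF with _ | ⟨hja, hF'⟩
    rw [surv_cons] at hS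
    obtain ⟨hlt1, hS'⟩ := hS
    have ha1 : 1 ≤ a := hge a (by simp)
    have hpos : 0 < 1 - (a : ℝ) * δ := by linarith
    have hja' : Hh v0 Δinc Δdec C T j = 1 - (a : ℝ) * δ := by
      rw [hja, max_eq_right (le_of_lt hpos)]
    have hph := phase v0 Δinc Δdec C δ hδ hδ0 (fun i => by rw [hD]; positivity)
      done rem' j hC T a ha1 hdone hja' hpos
    have hj1 : Hh v0 Δinc Δdec C (T + a) j = 1 := by
      have := (hph a le_rfl).1
      simpa using this
    have hjnotrem : j ∉ rem' := by
      rw [hC] at hnd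
      have h2 : (j :: rem').Nodup := (List.sublist_append_right done _).nodup hnd
      exact (List.nodup_cons.mp h2).1
    -- states of rem' nodes at time T + a
    have hstates : List.Forall₂ (fun (j' : Fin N) (b : ℕ) => Hh v0 Δinc Δdec C (T + a) j' =
        max 0 (1 - (b : ℝ) * δ)) rem' (A'.map fun b => b + n * a) := by
      rw [List.forall₂_map_right_iff]
      refine forall₂_imp_mem hF' ?_
      intro x b hx hbmem hxb
      have hxj : x ≠ j := fun h => hjnotrem (h ▸ hx)
      have hb1 : 1 ≤ b := hge b (List.mem_cons_of_mem _ hbmem)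
      have h0x : 0 ≤ Hh v0 Δinc Δdec C T x := by rw [hxb]; exact le_max_left _ _
      have h1x : Hh v0 Δinc Δdec C T x < 1 := by
        rw [hxb]
        apply max_lt one_pos
        have : (0:ℝ) < (b : ℝ) * δ := by
          have : (0:ℝ) < (b:ℝ) := by exact_mod_cast hb1
          positivity
        linarith
      have := (hph a le_rfl).2 x hxj h0x h1x
      rw [this, hxb, hD, max_collapse _ _ (by positivity)]
      congr 1
      push_cast
      ring
    rcases List.mem_cons.mp hj' with rfl | hmem
    · exact ⟨T + a, hj1⟩
    · refine IH (A'.map fun b => b + n * a) (T + a) (done ++ [j]) (by simp [hC]) hnd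
        ?_ hstates ?_ hS' j' hmem
      · intro i hi
        rcases List.mem_append.mp hi with hi | hi
        · exact Hh_one_absorb v0 Δinc Δdec C T i (hdone i hi) a
        · simp only [List.mem_singleton] at hi
          subst hi; exact hj1
      · intro b hb
        simp only [List.mem_map] at hb
        obtain ⟨b', hb', rfl⟩ := hb
        have := hge b' (List.mem_cons_of_mem _ hb')
        omega
end

section
variable {N : ℕ} (v0 : Fin N → ℝ) (Δinc : Fin N → Fin 1 → ℝ) (Δdec : Fin N → ℝ)
  (C : List (Fin N)) (δ : ℝ) (n : ℕ)

theorem extract (hδ : ∀ j h, Δinc j h = δ) (hδ0 : 0 < δ) (hD : ∀ i, Δdec i = (n : ℝ) * δ) :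
    ∀ (rem : List (Fin N)) (A : List ℕ) (T : ℕ) (done : List (Fin N)),
      C = done ++ rem → C.Nodup →
      (∀ i ∈ done, Hh v0 Δinc Δdec C T i = 1) →
      List.Forall₂ (fun (j : Fin N) (a : ℕ) => Hh v0 Δinc Δdec C T j = max 0 (1 - (a : ℝ) * δ)) rem A →
      (∀ a ∈ A, 1 ≤ a) →
      (∀ j ∈ rem, ∃ t, Hh v0 Δinc Δdec C t j = 1) →
      Surv δ n A := by
  intro rem
  induction rem with
  | nil =>
    intro A T done _ _ _ hF _ _
    cases hF
    exact surv_nil δ n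
  | cons j rem' IH =>
    intro A T done hC hnd hdone hF hge hrep
    cases A with
    | nil => exact absurd hF (by simp)
    | cons a A' =>
    rcases hF with _ | ⟨hja, hF'⟩
    have ha1 : 1 ≤ a := hge a (by simp)
    have hlt1 : (a : ℝ) * δ < 1 := by
      by_contra hcon
      push_neg at hcon
      have hz : Hh v0 Δinc Δdec C T j = 0 := by
        rw [hja, max_eq_left (by linarith)]
      exact Hh_never_one v0 Δinc Δdec C T j hz (hrep j (by simp))
    have hpos : 0 < 1 - (a : ℝ) * δ := by linarith
    have hja' : Hh v0 Δinc Δdec C T j = 1 - (a : ℝ) * δ := by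
      rw [hja, max_eq_right (le_of_lt hpos)]
    have hph := phase v0 Δinc Δdec C δ hδ hδ0 (fun i => by rw [hD]; positivity)
      done rem' j hC T a ha1 hdone hja' hpos
    have hj1 : Hh v0 Δinc Δdec C (T + a) j = 1 := by
      have := (hph a le_rfl).1
      simpa using this
    have hjnotrem : j ∉ rem' := by
      rw [hC] at hnd
      have h2 : (j :: rem').Nodup := (List.sublist_append_right done _).nodup hnd
      exact (List.nodup_cons.mp h2).1
    have hstates : List.Forall₂ (fun (j' : Fin N) (b : ℕ) => Hh v0 Δinc Δdec C (T + a) j' =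
        max 0 (1 - (b : ℝ) * δ)) rem' (A'.map fun b => b + n * a) := by
      rw [List.forall₂_map_right_iff]
      refine forall₂_imp_mem hF' ?_
      intro x b hx hbmem hxb
      have hxj : x ≠ j := fun h => hjnotrem (h ▸ hx)
      have hb1 : 1 ≤ b := hge b (List.mem_cons_of_mem _ hbmem)
      have h0x : 0 ≤ Hh v0 Δinc Δdec C T x := by rw [hxb]; exact le_max_left _ _
      have h1x : Hh v0 Δinc Δdec C T x < 1 := by
        rw [hxb]
        apply max_lt one_pos
        have hb0 : 0 < b := hb1
        have : (0:ℝ) < (b : ℝ) * δ := by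
          have : (0:ℝ) < (b:ℝ) := by exact_mod_cast hb0
          positivity
        linarith
      have := (hph a le_rfl).2 x hxj h0x h1x
      rw [this, hxb, hD, max_collapse _ _ (by positivity)]
      congr 1
      push_cast
      ring
    rw [surv_cons]
    refine ⟨hlt1, ?_⟩
    refine IH (A'.map fun b => b + n * a) (T + a) (done ++ [j]) (by simp [hC]) hnd
      ?_ hstates ?_ ?_
    · intro i hi
      rcases List.mem_append.mp hi with hi | hi
      · exact Hh_one_absorb v0 Δinc Δdec C T i (hdone i hi) a
      · simp only [List.mem_singleton] at hi
        subst hi; exact hj1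
    · intro b hb
      simp only [List.mem_map] at hb
      obtain ⟨b', hb', rfl⟩ := hb
      have := hge b' (List.mem_cons_of_mem _ hb')
      omega
    · intro j' hj'
      exact hrep j' (List.mem_cons_of_mem _ hj')
end


theorem chain'_forall₂_dropLast_tail {α : Type*} {R : α → α → Prop} :
    ∀ (L : List α), List.Chain' R L → List.Forall₂ R L.dropLast L.tail
  | [], _ => List.Forall₂.nil
  | [x], _ => by simp
  | x :: y :: L, h => by
    obtain ⟨hxy, h'⟩ := List.isChain_cons_cons.mp h
    rw [List.dropLast_cons₂]
    exact List.Forall₂.cons hxy (chain'_forall₂_dropLast_tail (y :: L) h')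


/-- If a single entity, following the non-jumping sequence targeting the nodes
`i₁ :: rest` in decreasing order of initial health from time 0, permanently
repairs all of them, and `k` is a node with `v0 k > v0 i₁`, then the
non-jumping sequence targeting `k` from time 0 followed by all but the last of
the original nodes permanently repairs all of its nodes. -/
theorem prepend_healthier_node_repairs_all {N : ℕ} (hN : 2 ≤ N)
    (v0 : Fin N → ℝ) (Δinc : Fin N → Fin 1 → ℝ) (Δdec : Fin N → ℝ) (c : Fin 1 → NNReal)
    (hv0 : ∀ j, 0 < v0 j ∧ v0 j < 1) (hdec : ∀ j, 0 < Δdec j)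
    (hinc : ∀ j h, 0 < Δinc j h) (hA : Assumption2 v0 Δinc Δdec c)
    (i₁ : Fin N) (rest : List (Fin N))
    (hnd : (i₁ :: rest).Nodup)
    (hsort : (i₁ :: rest).Pairwise fun j j' => v0 j' ≤ v0 j)
    (hrep : ∀ j ∈ i₁ :: rest,
      ∃ t, listHealth v0 Δinc Δdec (fun _ : Fin 1 => i₁ :: rest) t j = 1)
    (k : Fin N) (hk : v0 i₁ < v0 k) :
    ∀ j ∈ k :: (i₁ :: rest).dropLast,
      ∃ t, listHealth v0 Δinc Δdec (fun _ : Fin 1 => k :: (i₁ :: rest).dropLast) t j = 1 := by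
  obtain ⟨Δi, Δd, c', h1, h2, h3, h4, h5, h6⟩ := hA
  set δ := Δi 0 with hδdef
  have hδ : ∀ j h, Δinc j h = δ := fun j h => by
    rw [h1 j h]; congr 1; exact Subsingleton.elim h 0
  obtain ⟨n, hn0, hnδ⟩ := h5 0
  have hδ0 : 0 < δ := by
    have := hinc ⟨0, by omega⟩ 0
    rwa [hδ ⟨0, by omega⟩ 0] at this
  have hD : ∀ i, Δdec i = (n : ℝ) * δ := fun i => by rw [h2 i, hnδ]
  choose m hm0 hm using fun j => h6 j 0
  set Lold : List (Fin N) := i₁ :: rest with hLold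
  set Lnew : List (Fin N) := k :: Lold.dropLast with hLnew
  have hstate : ∀ (L : List (Fin N)) (x : Fin N),
      Hh v0 Δinc Δdec L 0 x = max 0 (1 - (m x : ℝ) * δ) := by
    intro L x
    have hv : (1 : ℝ) - (m x : ℝ) * δ = v0 x := by rw [← hm x]; ring
    show v0 x = _
    rw [hv, max_eq_right (le_of_lt (hv0 x).1)]
  have hge : ∀ (L : List (Fin N)), ∀ a ∈ L.map m, 1 ≤ a := by
    intro L a ha
    obtain ⟨x, _, rfl⟩ := List.mem_map.mp ha
    exact hm0 x
  have hFgen : ∀ (L : List (Fin N)), List.Forall₂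
      (fun (j : Fin N) (a : ℕ) => Hh v0 Δinc Δdec L 0 j = max 0 (1 - (a : ℝ) * δ))
      L (L.map m) := by
    intro L
    rw [List.forall₂_map_right_iff]
    exact List.forall₂_same.mpr fun x _ => hstate L x
  have hS_old : Surv δ n (Lold.map m) :=
    extract v0 Δinc Δdec Lold δ n hδ hδ0 hD Lold (Lold.map m) 0 [] rfl hnd
      (by simp) (hFgen Lold) (hge Lold) hrep
  -- ordering facts
  have hmono : ∀ x y : Fin N, v0 y ≤ v0 x → m x ≤ m y := by
    intro x y hxy
    have hmm : (m x : ℝ) * δ ≤ (m y : ℝ) * δ := by rw [← hm x, ← hm y]; linarith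
    have := le_of_mul_le_mul_right hmm hδ0
    exact_mod_cast this
  have hmk : m k < m i₁ := by
    have hmm : (m k : ℝ) * δ < (m i₁ : ℝ) * δ := by rw [← hm k, ← hm i₁]; linarith
    have := lt_of_mul_lt_mul_right hmm (le_of_lt hδ0)
    exact_mod_cast this
  have hchain : List.Chain' (fun x y => v0 y ≤ v0 x) Lold := hsort.isChain
  have hdt : List.Forall₂ (fun x y => v0 y ≤ v0 x) Lold.dropLast Lold.tail :=
    chain'_forall₂_dropLast_tail Lold hchain
  have hle : List.Forall₂ (· ≤ ·) (Lnew.map m) (Lold.map m) := by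
    rw [hLnew, hLold, List.map_cons, List.map_cons]
    refine List.Forall₂.cons (le_of_lt hmk) ?_
    rw [List.forall₂_map_left_iff, List.forall₂_map_right_iff]
    exact (show List.Forall₂ (fun x y => v0 y ≤ v0 x) Lold.dropLast rest from hdt).imp
      fun x y hxy => hmono x y hxy
  have hS_new : Surv δ n (Lnew.map m) := surv_mono δ (le_of_lt hδ0) n _ _ hle hS_old
  have hkgt : ∀ j ∈ Lold, v0 j < v0 k := by
    intro j hj
    rcases List.mem_cons.mp hj with rfl | hj
    · exact hk
    · exact lt_of_le_of_lt ((List.pairwise_cons.mp hsort).1 j hj) hk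
  have hknotin : k ∉ Lold := fun h => lt_irrefl _ (hkgt k h)
  have hnd_new : Lnew.Nodup := by
    rw [hLnew, List.nodup_cons]
    exact ⟨fun h => hknotin ((List.dropLast_sublist Lold).subset h),
      (List.dropLast_sublist Lold).nodup hnd⟩
  exact run v0 Δinc Δdec Lnew δ n hδ hδ0 hD Lnew (Lnew.map m) 0 [] rfl hnd_new
    (by simp) (hFgen Lnew) (hge Lnew) hS_new
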